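/- arXiv:2511.08382 — 2 statements merged into one kernel-verified Lean document; each statement's English description precedes it below -/
import Mathlib

section
/- Let σ be an irreducible representation of the stacked quasi-local algebra 𝔄₁⊗_s 𝔄₂ on a Hilbert space ℋ and σ₁(A) = σ(A⊗𝕀). Then for every cone Λ, the restriction of σ₁ to the cone algebra 𝔄₁(Λ) is a factor representation: σ₁(𝔄₁(Λ))'' ∩ σ₁(𝔄₁(Λ))' = ℂ𝕀. -/
noncomputable section

open scoped InnerProductSpace
open Filter

universe u

/-! ## Geometry: the plane and cones -/

/-- The two-dimensional Euclidean plane in which the lattice `Γ` lives. -/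
abbrev Plane : Type := EuclideanSpace ℝ (Fin 2)

/-- A cone in the plane, given by an apex, a unit axis direction and an
opening angle in `(0, 2π)`. -/
structure Cone : Type where
  apex : Plane
  dir : Plane
  dir_norm : ‖dir‖ = 1
  angle : ℝ
  angle_pos : 0 < angle
  angle_lt : angle < 2 * Real.pi

namespace Cone

/-- The set of points of a cone. -/
def set (c : Cone) : Set Plane :=
  {x | Real.cos (c.angle / 2) * ‖x - c.apex‖ ≤ ⟪c.dir, x - c.apex⟫_ℝ}

/-- Translate a cone by a vector. -/
def translate (c : Cone) (v : Plane) : Cone := { c with apex := c.apex + v }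

/-- The cone `Λ - t ê_Λ`, extended a distance `t` against its axis direction. -/
def extend (c : Cone) (t : ℝ) : Cone := { c with apex := c.apex - t • c.dir }

/-- The cone `Λ_ε - t ê_Λ`: widened by the angle `ε` and extended a distance `t`
against its axis direction, as a subset of the plane. -/
def widenExtend (c : Cone) (ε t : ℝ) : Set Plane :=
  {x | Real.cos ((c.angle + ε) / 2) * ‖x - (c.apex - t • c.dir)‖ ≤
    ⟪c.dir, x - (c.apex - t • c.dir)⟫_ℝ}

/-- Cones with rational parameters (apex, direction angle, opening angle);
these form a countable family. -/
def IsRational (c : Cone) : Prop :=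
  (∀ i : Fin 2, ∃ q : ℚ, c.apex i = (q : ℝ)) ∧
    (∃ θ : ℚ, c.dir 0 = Real.cos (θ : ℝ) ∧ c.dir 1 = Real.sin (θ : ℝ)) ∧
    ∃ q : ℚ, c.angle = (q : ℝ)

end Cone

/-- `ConeSSub d Λ₁ Λ₂` is the relation `Λ₁ ⋐ Λ₂` : `Λ₂` contains `Λ₁`, opens at a
wider angle, and `dist (Λ₁, Λ₂ᶜ) > d`. -/
def ConeSSub (d : ℝ) (c1 c2 : Cone) : Prop :=
  c1.set ⊆ c2.set ∧ c1.angle < c2.angle ∧ ∀ x ∈ c1.set, ∀ y ∈ c2.setᶜ, d < dist x y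

/-- A cone is admissible for the auxiliary cone `Λa` if some translate of it is
disjoint from `Λa`. -/
def ConeAdmissible (Λa c : Cone) : Prop := ∃ v : Plane, Disjoint (c.translate v).set Λa.set

/-! ## Operators on Hilbert spaces, commutants, von Neumann algebras -/

/-- The bounded operators on a complex Hilbert space. -/
abbrev Bop (H : Type*) [NormedAddCommGroup H] [InnerProductSpace ℂ H] [CompleteSpace H] :=
  H →L[ℂ] H

section Op

variable {H K : Type*}
  [NormedAddCommGroup H] [InnerProductSpace ℂ H] [CompleteSpace H]
  [NormedAddCommGroup K] [InnerProductSpace ℂ K] [CompleteSpace K]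

/-- The commutant of a set of bounded operators. -/
def commutantS (S : Set (Bop H)) : Set (Bop H) := {y | ∀ x ∈ S, x * y = y * x}

/-- The von Neumann algebra generated by a (self-adjoint) set of bounded operators:
its double commutant. -/
def vN (S : Set (Bop H)) : Set (Bop H) := commutantS (commutantS S)

/-- The scalar multiples of the identity operator. -/
def ScalarOps : Set (Bop H) := Set.range fun c : ℂ => c • (1 : Bop H)

def IsUnitaryOp (U : Bop H) : Prop := star U * U = 1 ∧ U * star U = 1

def IsProjectionOp (p : Bop H) : Prop := p * p = p ∧ star p = p

/-- `p` is a finite projection relative to `M` (no Murray-von Neumann equivalence onto a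
proper subprojection of itself). -/
def IsFiniteProjIn (M : Set (Bop H)) (p : Bop H) : Prop :=
  ∀ v ∈ M, star v * v = p → p * (v * star v) = v * star v → v * star v = p

/-- A von Neumann algebra is properly infinite if it contains no nonzero finite
central projection. -/
def ProperlyInfinite (M : Set (Bop H)) : Prop :=
  ∀ p ∈ M, IsProjectionOp p → p ∈ commutantS M → IsFiniteProjIn M p → p = 0

/-- A factor: trivial center. -/
def IsFactor (M : Set (Bop H)) : Prop := M ∩ commutantS M ⊆ ScalarOps

/-- A set of operators is a von Neumann algebra if it is self-adjoint and equal to its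
double commutant. -/
def IsVonNeumann (M : Set (Bop H)) : Prop := (∀ x ∈ M, star x ∈ M) ∧ M = vN M

def IsMinimalProjIn (M : Set (Bop H)) (p : Bop H) : Prop :=
  p ∈ M ∧ IsProjectionOp p ∧ p ≠ 0 ∧
    ∀ q ∈ M, IsProjectionOp q → p * q = q → q = 0 ∨ q = p

/-- A factor is of Type I iff it contains a minimal projection. -/
def IsTypeIFactor (M : Set (Bop H)) : Prop := IsFactor M ∧ ∃ p, IsMinimalProjIn M p

/-- Irreducibility of a representation: the commutant of the image consists of the
scalar operators. -/
def IsIrredRep {A : Type*} (π : A → Bop H) : Prop := commutantS (Set.range π) = ScalarOps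

/-- The σ-weakly continuous (normal) functionals on `B(H)`. -/
def sigmaWeakFunctionals (H : Type*) [NormedAddCommGroup H] [InnerProductSpace ℂ H]
    [CompleteSpace H] : Set (Bop H → ℂ) :=
  {f | ∃ ξ η : ℕ → H, Summable (fun n => ‖ξ n‖ ^ 2) ∧ Summable (fun n => ‖η n‖ ^ 2) ∧
    ∀ x : Bop H, f x = ∑' n, ⟪ξ n, x (η n)⟫_ℂ}

/-- A map defined on (a subset of) `B(H)` is normal on `M` if it pulls back σ-weakly
continuous functionals to σ-weakly continuous functionals, i.e. it is σ-weakly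
continuous on `M`. -/
def IsNormalOn (M : Set (Bop H)) (Φ : Bop H → Bop K) : Prop :=
  ∀ g ∈ sigmaWeakFunctionals K, ∃ f ∈ sigmaWeakFunctionals H, ∀ x ∈ M, g (Φ x) = f x

/-- `Φ` is a unital `*`-homomorphism on the subalgebra `M`. -/
def StarHomOn (M : Set (Bop H)) (Φ : Bop H → Bop K) : Prop :=
  Φ 1 = 1 ∧ (∀ x ∈ M, ∀ y ∈ M, Φ (x + y) = Φ x + Φ y) ∧
    (∀ x ∈ M, ∀ y ∈ M, Φ (x * y) = Φ x * Φ y) ∧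
    (∀ (c : ℂ), ∀ x ∈ M, Φ (c • x) = c • Φ x) ∧
    ∀ x ∈ M, Φ (star x) = star (Φ x)

/-- `Φ` restricted to the set `S` acts non-degenerately on `K`. -/
def NondegenOn (S : Set (Bop H)) (Φ : Bop H → Bop K) : Prop :=
  Dense ((Submodule.span ℂ {v : K | ∃ x ∈ S, ∃ w : K, v = Φ x w} : Submodule ℂ K) : Set K)

/-- The compact operators relative to a Type I factor `N`: the C*-subalgebra generated
by the finite projections of `N`. -/
def relCompact (N : Set (Bop H)) : Set (Bop H) :=
  closure ((NonUnitalStarAlgebra.adjoin ℂ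
    {p ∈ N | IsProjectionOp p ∧ IsFiniteProjIn N p} :
      NonUnitalStarSubalgebra ℂ (Bop H)) : Set (Bop H))

/-- The unital C*-algebra `𝔎^{Λa}` generated by the identity together with the compact
operators relative to the interpolating Type I factors `N Λ₁ Λ₂`, for rational admissible
pairs `Λ₁ ⋐ Λ₂`. -/
def KAlgebra (d : ℝ) (Λa : Cone) (N : Cone → Cone → Set (Bop H)) : Set (Bop H) :=
  closure ((StarAlgebra.adjoin ℂ
    {x : Bop H | ∃ c1 c2 : Cone, c1.IsRational ∧ c2.IsRational ∧ ConeAdmissible Λa c1 ∧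
      ConeAdmissible Λa c2 ∧ ConeSSub d c1 c2 ∧ x ∈ relCompact (N c1 c2)} :
        StarSubalgebra ℂ (Bop H)) : Set (Bop H))

/-- `(H, π, Ω)` is a GNS triple for the state `ω` : the vector state of `Ω` is `ω` and
`Ω` is cyclic. -/
def IsGNSRep {A : Type*} (π : A → Bop H) (Ω : H) (ω : A → ℂ) : Prop :=
  (∀ a : A, ⟪Ω, π a Ω⟫_ℂ = ω a) ∧
    Dense ((Submodule.span ℂ {v : H | ∃ a : A, v = π a Ω} : Submodule ℂ H) : Set H)

end Op
/-! ## Quasi-local algebras and superselection theory -/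

/-- A quasi-local algebra on (a lattice in) the plane: a C*-algebra together with a net
of localized subalgebras indexed by regions of the plane. -/
structure QuasiLocal (A : Type*) [NormedRing A] [StarRing A] [NormedAlgebra ℂ A]
    [StarModule ℂ A] where
  lattice : Set Plane
  loc : Set Plane → StarSubalgebra ℂ A
  mono : Monotone loc
  loc_commute : ∀ S T : Set Plane, Disjoint S T → ∀ a ∈ loc S, ∀ b ∈ loc T, a * b = b * a
  split_dense : ∀ S : Set Plane,
    Dense ((StarAlgebra.adjoin ℂ ((loc S : Set A) ∪ (loc Sᶜ : Set A)) :
      StarSubalgebra ℂ A) : Set A)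

section QL

variable {A : Type*} [NormedRing A] [StarRing A] [NormedAlgebra ℂ A] [StarModule ℂ A]
variable {H K : Type*}
  [NormedAddCommGroup H] [InnerProductSpace ℂ H] [CompleteSpace H]
  [NormedAddCommGroup K] [InnerProductSpace ℂ K] [CompleteSpace K]

/-- The superselection criterion of a representation `ρ` with respect to the reference
representation `π` : for every cone `Λ`, the restrictions of `ρ` and `π` to the algebra
of the cone complement are unitarily equivalent. -/
def SSC (Q : QuasiLocal A) (π : A → Bop K) (ρ : A → Bop H) : Prop :=
  ∀ Λ : Cone, ∃ U : H ≃ₗᵢ[ℂ] K, ∀ a ∈ Q.loc Λ.setᶜ, ∀ v : H, U (ρ a v) = π a (U v)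

/-- The variant of the superselection criterion where the restriction to every cone
algebra is unitarily implemented. -/
def SSCcone (Q : QuasiLocal A) (π : A → Bop K) (ρ : A → Bop H) : Prop :=
  ∀ Λ : Cone, ∃ U : H ≃ₗᵢ[ℂ] K, ∀ a ∈ Q.loc Λ.set, ∀ v : H, U (ρ a v) = π a (U v)

/-- Approximate Haag duality with explicit parameters: constant `R`, approximating
functions `f δ` and cone-indexed unitaries `U`. -/
def HaagWith (Q : QuasiLocal A) (π : A → Bop H) (R : ℝ) (f : ℝ → ℝ → ℝ)
    (U : Cone → Bop H) : Prop :=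
  0 < R ∧ (∀ δ : ℝ, 0 < δ → Antitone (f δ)) ∧
    (∀ δ : ℝ, 0 < δ → Filter.Tendsto (f δ) Filter.atTop (nhds 0)) ∧
    ∀ Λ : Cone, IsUnitaryOp (U Λ) ∧
      commutantS ((π '' (Q.loc Λ.setᶜ : Set A) : Set (Bop H))) ⊆
        (fun x => U Λ * x * star (U Λ)) '' vN (π '' (Q.loc (Λ.extend R).set : Set A)) ∧
      ∀ ε δ t : ℝ, 0 < ε → 0 < δ → 0 < t →
        ∃ V : Bop H, IsUnitaryOp V ∧
          V ∈ vN (π '' (Q.loc (Λ.widenExtend (ε + δ) t) : Set A)) ∧ ‖U Λ - V‖ < f δ t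

/-- Approximate Haag duality. -/
def ApproxHaag (Q : QuasiLocal A) (π : A → Bop H) : Prop :=
  ∃ R f U, HaagWith Q π R f U

/-- The cone algebras of `π` are properly infinite factors. -/
def ConeFactorAssumption (Q : QuasiLocal A) (π : A → Bop H) : Prop :=
  ∀ Λ : Cone, IsFactor (vN (π '' (Q.loc Λ.set : Set A))) ∧
    ProperlyInfinite (vN (π '' (Q.loc Λ.set : Set A)))

/-- The standing assumptions on a reference representation: irreducibility, properly
infinite factor cone algebras, and approximate Haag duality. -/
def StandingAssumptions (Q : QuasiLocal A) (π : A → Bop H) : Prop :=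
  IsIrredRep π ∧ ConeFactorAssumption Q π ∧ ApproxHaag Q π

/-- The approximate split property (with distance scale `d`). -/
def ApproxSplit (d : ℝ) (Q : QuasiLocal A) (σ : A → Bop H) : Prop :=
  ∀ c1 c2 : Cone, ConeSSub d c1 c2 → ∃ N : Set (Bop H),
    IsVonNeumann N ∧ IsTypeIFactor N ∧
      vN (σ '' (Q.loc c1.set : Set A)) ⊆ N ∧ N ⊆ vN (σ '' (Q.loc c2.set : Set A))

/-- Quasi-equivalence of the restrictions of `ρ` and `π` to the subset `restr` of `A`:
a `*`-isomorphism of the generated von Neumann algebras intertwining the two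
representations. -/
def QuasiEquivOn (restr : Set A) (ρ : A → Bop H) (π : A → Bop K) : Prop :=
  ∃ Φ : Bop H → Bop K,
    Set.BijOn Φ (vN (ρ '' restr)) (vN (π '' restr)) ∧
    (∀ x ∈ vN (ρ '' restr), ∀ y ∈ vN (ρ '' restr),
      Φ (x + y) = Φ x + Φ y ∧ Φ (x * y) = Φ x * Φ y) ∧
    (∀ (c : ℂ), ∀ x ∈ vN (ρ '' restr), Φ (c • x) = c • Φ x) ∧
    (∀ x ∈ vN (ρ '' restr), Φ (star x) = star (Φ x)) ∧
    ∀ a ∈ restr, Φ (ρ a) = π a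

/-- The auxiliary algebra `𝔅^{Λa}`: the norm closure of the union of the von Neumann
cone algebras `𝔅(Λaᶜ + x)''` over all translates. -/
def auxAlgebra (Q : QuasiLocal A) (φ : A → Bop H) (Λa : Cone) : Set (Bop H) :=
  closure (⋃ v : Plane, vN (φ '' (Q.loc ((fun p => p + v) '' Λa.setᶜ) : Set A)))

/-- A locally normal representation of the auxiliary algebra `𝔅^{Λa}` : a unital
`*`-homomorphism which is normal on each admissible cone von Neumann algebra. -/
def IsLocallyNormalRep (Q : QuasiLocal A) (φ : A → Bop H) (Λa : Cone)
    (Φ : Bop H → Bop K) : Prop :=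
  StarHomOn (auxAlgebra Q φ Λa) Φ ∧
    ∀ c : Cone, ConeAdmissible Λa c → IsNormalOn (vN (φ '' (Q.loc c.set : Set A))) Φ

/-- Positivity of a linear functional. -/
def IsPositiveFunctional (ω : A →ₗ[ℂ] ℂ) : Prop :=
  ∀ a : A, ∃ r : ℝ, 0 ≤ r ∧ ω (star a * a) = (r : ℂ)

/-- A state on a C*-algebra. -/
def IsState (ω : A →ₗ[ℂ] ℂ) : Prop := IsPositiveFunctional ω ∧ ω 1 = 1

/-- A pure state: any positive functional dominated by it is a multiple of it. -/
def IsPureState (ω : A →ₗ[ℂ] ℂ) : Prop :=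
  IsState ω ∧ ∀ ψ : A →ₗ[ℂ] ℂ, IsPositiveFunctional ψ → IsPositiveFunctional (ω - ψ) →
    ∃ t : ℝ, ψ = (t : ℂ) • ω

/-- A product state with respect to the local structure: it factorizes over disjoint
regions. -/
def IsProductState (Q : QuasiLocal A) (ω : A → ℂ) : Prop :=
  ∀ S T : Set Plane, Disjoint S T → ∀ a ∈ Q.loc S, ∀ b ∈ Q.loc T, ω (a * b) = ω a * ω b

/-- A locally generated automorphism, abstracted through its key property: it moves
localized observables only by an approximately local amount, with uniformly decaying
tails. -/
def IsApproxLocalAut (Q : QuasiLocal A) (α : A → A) : Prop :=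
  ∃ g : ℝ → ℝ, Antitone g ∧ Filter.Tendsto g Filter.atTop (nhds 0) ∧
    ∀ (S : Set Plane) (r : ℝ), 0 < r → ∀ a ∈ Q.loc S,
      ∃ b ∈ Q.loc (Metric.thickening r S), ‖α a - b‖ ≤ g r * ‖a‖

end QL
/-! ## Tensor products (spatial/minimal) of Hilbert spaces and C*-algebras,
given as abstract tensor-product data. -/

/-- A realization of the Hilbert space tensor product `H1 ⊗ H2` on the Hilbert space
`H`, together with the induced tensor product of bounded operators. -/
structure HilbertTensor (H1 H2 H : Type*)
    [NormedAddCommGroup H1] [InnerProductSpace ℂ H1] [CompleteSpace H1]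
    [NormedAddCommGroup H2] [InnerProductSpace ℂ H2] [CompleteSpace H2]
    [NormedAddCommGroup H] [InnerProductSpace ℂ H] [CompleteSpace H] where
  tmul : H1 →ₗ[ℂ] H2 →ₗ[ℂ] H
  inner_tmul : ∀ (x1 y1 : H1) (x2 y2 : H2),
    ⟪tmul x1 x2, tmul y1 y2⟫_ℂ = ⟪x1, y1⟫_ℂ * ⟪x2, y2⟫_ℂ
  dense_span : Dense ((Submodule.span ℂ {z : H | ∃ x y, z = tmul x y} : Submodule ℂ H) : Set H)
  opTensor : Bop H1 →ₗ[ℂ] Bop H2 →ₗ[ℂ] Bop H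
  opTensor_tmul : ∀ (a : Bop H1) (b : Bop H2) (x : H1) (y : H2),
    opTensor a b (tmul x y) = tmul (a x) (b y)

/-- A realization of the spatial (minimal) tensor product `A1 ⊗_s A2` of two
C*-algebras on the C*-algebra `A` : the stacked algebra. -/
structure CStarStack (A1 A2 A : Type*)
    [NormedRing A1] [StarRing A1] [NormedAlgebra ℂ A1] [StarModule ℂ A1]
    [NormedRing A2] [StarRing A2] [NormedAlgebra ℂ A2] [StarModule ℂ A2]
    [NormedRing A] [StarRing A] [NormedAlgebra ℂ A] [StarModule ℂ A] where
  tmul : A1 →ₗ[ℂ] A2 →ₗ[ℂ] A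
  tmul_mul : ∀ (a1 b1 : A1) (a2 b2 : A2), tmul a1 a2 * tmul b1 b2 = tmul (a1 * b1) (a2 * b2)
  tmul_star : ∀ (a1 : A1) (a2 : A2), star (tmul a1 a2) = tmul (star a1) (star a2)
  tmul_one : tmul 1 1 = 1
  norm_tmul : ∀ (a1 : A1) (a2 : A2), ‖tmul a1 a2‖ = ‖a1‖ * ‖a2‖
  dense_prod : Dense ((StarAlgebra.adjoin ℂ {z : A | ∃ a b, z = tmul a b} :
    StarSubalgebra ℂ A) : Set A)

/-- The stacked system `𝔄₁ ⊗_s 𝔄₂` of two quasi-local algebras: a quasi-local structure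
on the spatial tensor product whose local algebras are generated by
`𝔄₁(Λ) ⊗_s 𝔄₂(Λ)`. -/
structure StackedQL {A1 A2 A : Type*}
    [NormedRing A1] [StarRing A1] [NormedAlgebra ℂ A1] [StarModule ℂ A1]
    [NormedRing A2] [StarRing A2] [NormedAlgebra ℂ A2] [StarModule ℂ A2]
    [NormedRing A] [StarRing A] [NormedAlgebra ℂ A] [StarModule ℂ A]
    (Q1 : QuasiLocal A1) (Q2 : QuasiLocal A2) (S : CStarStack A1 A2 A) where
  Q : QuasiLocal A
  loc_eq : ∀ T : Set Plane, (Q.loc T : Set A) =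
    closure ((StarAlgebra.adjoin ℂ
      {z : A | ∃ a ∈ Q1.loc T, ∃ b ∈ Q2.loc T, z = S.tmul a b} : StarSubalgebra ℂ A) : Set A)

/-- A bundled Hilbert space. -/
structure HilbertPt : Type (u + 1) where
  carrier : Type u
  [nacg : NormedAddCommGroup carrier]
  [ips : InnerProductSpace ℂ carrier]
  [cs : CompleteSpace carrier]

attribute [instance] HilbertPt.nacg HilbertPt.ips HilbertPt.cs

/-- A bundled C*-algebra. -/
structure CStarPt : Type (u + 1) where
  carrier : Type u
  [nr : NormedRing carrier]
  [sr : StarRing carrier]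
  [csr : CStarRing carrier]
  [na : NormedAlgebra ℂ carrier]
  [sm : StarModule ℂ carrier]
  [cp : CompleteSpace carrier]

attribute [instance] CStarPt.nr CStarPt.sr CStarPt.csr CStarPt.na CStarPt.sm CStarPt.cp

/-- A direct integral decomposition `H ≅ ∫_X^⊕ H_x dμ(x)`, `ρ ≅ ∫_X^⊕ ρ_x dμ(x)` of a
representation `ρ` into the representations `ρ_x`, given by the section map
`ξ ↦ (ξ_x)_x`. -/
structure DirectIntegralDecomp {A : Type*} {H : Type u}
    [NormedAddCommGroup H] [InnerProductSpace ℂ H] [CompleteSpace H]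
    (ρ : A → Bop H) {X : Type*} [MeasurableSpace X] (μ : MeasureTheory.Measure X)
    (Hx : X → HilbertPt.{u}) (ρx : (x : X) → A → Bop (Hx x).carrier) where
  sec : H →ₗ[ℂ] ((x : X) → (Hx x).carrier)
  inner_eq : ∀ ξ η : H, ⟪ξ, η⟫_ℂ = ∫ x, ⟪sec ξ x, sec η x⟫_ℂ ∂μ
  intertwine : ∀ (a : A) (ξ : H), ∀ᵐ x ∂μ, sec (ρ a ξ) x = ρx x a (sec ξ x)
  mult_stable : ∀ f : X → ℂ, Measurable f → (∀ x, ‖f x‖ ≤ 1) →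
    ∀ ξ : H, ∃ η : H, ∀ᵐ x ∂μ, sec η x = f x • sec ξ x

/-- An invertible state: it stacks with some pure state on another quasi-local algebra
to a state which is mapped to a product state by a locally generated automorphism. -/
def IsInvertibleState {A : Type u} [NormedRing A] [StarRing A] [NormedAlgebra ℂ A]
    [StarModule ℂ A] (Q : QuasiLocal A) (ω : A →ₗ[ℂ] ℂ) : Prop :=
  ∃ (Ab : CStarPt.{u}) (Qb : QuasiLocal Ab.carrier) (ωb : Ab.carrier →ₗ[ℂ] ℂ),
    IsPureState ωb ∧
    ∃ (C : CStarPt.{u}) (S : CStarStack A Ab.carrier C.carrier) (SQ : StackedQL Q Qb S)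
      (ωs : C.carrier →ₗ[ℂ] ℂ),
      Continuous ωs ∧ (∀ (a : A) (b : Ab.carrier), ωs (S.tmul a b) = ω a * ωb b) ∧
      ∃ α : C.carrier ≃⋆ₐ[ℂ] C.carrier,
        IsApproxLocalAut SQ.Q ⇑α ∧ IsApproxLocalAut SQ.Q ⇑α.symm ∧
        IsProductState SQ.Q fun c => ωs (α c)

section AuxCommutant

variable {H : Type*} [NormedAddCommGroup H] [InnerProductSpace ℂ H] [CompleteSpace H]

lemma commutantS_anti {S T : Set (Bop H)} (h : S ⊆ T) : commutantS T ⊆ commutantS S :=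
  fun y hy x hx => hy x (h hx)

lemma subset_vN (S : Set (Bop H)) : S ⊆ vN S :=
  fun x hx y hy => (hy x hx).symm

lemma commutantS_vN_eq (S : Set (Bop H)) : commutantS (vN S) = commutantS S :=
  le_antisymm (commutantS_anti (subset_vN S)) (subset_vN (commutantS S))

lemma vN_mono {S T : Set (Bop H)} (h : S ⊆ T) : vN S ⊆ vN T :=
  commutantS_anti (commutantS_anti h)

lemma star_mem_commutantS {S : Set (Bop H)} (hS : ∀ x ∈ S, star x ∈ S)
    {y : Bop H} (hy : y ∈ commutantS S) : star y ∈ commutantS S := by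
  intro x hx
  have h := hy (star x) (hS x hx)
  calc x * star y = star (y * star x) := by simp [star_mul]
    _ = star (star x * y) := by rw [h]
    _ = star y * x := by simp [star_mul]

lemma mul_comm_aux {M : Type*} [Monoid M] {x y z : M}
    (hx : x * z = z * x) (hy : y * z = z * y) : (x * y) * z = z * (x * y) := by
  rw [mul_assoc, hy, ← mul_assoc, hx, mul_assoc]

end AuxCommutant

/-- For every cone `Λ`, the restriction to the cone algebra
`𝔄₁(Λ)` of one layer of an irreducible representation of the stacked system is a
factor representation. -/
theorem restriction_to_cone_is_factor_representation
    {A1 A2 A K : Type*}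
    [NormedRing A1] [StarRing A1] [CStarRing A1] [NormedAlgebra ℂ A1] [StarModule ℂ A1] [CompleteSpace A1]
    [NormedRing A2] [StarRing A2] [CStarRing A2] [NormedAlgebra ℂ A2] [StarModule ℂ A2] [CompleteSpace A2]
    [NormedRing A] [StarRing A] [CStarRing A] [NormedAlgebra ℂ A] [StarModule ℂ A] [CompleteSpace A]
    [NormedAddCommGroup K] [InnerProductSpace ℂ K] [CompleteSpace K]
    (Q1 : QuasiLocal A1) (Q2 : QuasiLocal A2)
    (S : CStarStack A1 A2 A) (SQ : StackedQL Q1 Q2 S)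
    (σ : A →⋆ₐ[ℂ] Bop K) (hσirr : IsIrredRep ⇑σ) :
    ∀ Λ : Cone,
      IsFactor (vN ((fun a : A1 => σ (S.tmul a 1)) '' (Q1.loc Λ.set : Set A1))) := by
  intro Λ
  letI : CStarAlgebra A :=
    { ‹NormedRing A›, ‹StarRing A›, ‹CStarRing A›, ‹NormedAlgebra ℂ A›, ‹StarModule ℂ A›,
      ‹CompleteSpace A› with }
  have hσcont : Continuous σ :=
    AddMonoidHomClass.continuous_of_bound σ 1
      (by simpa using fun a => NonUnitalStarAlgHom.norm_apply_le σ a)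
  set σ1 : A1 → Bop K := fun a => σ (S.tmul a 1) with hσ1
  set σ2 : A2 → Bop K := fun b => σ (S.tmul 1 b) with hσ2
  have htmul1cont : Continuous fun a : A1 => S.tmul a 1 := by
    have : (fun a : A1 => S.tmul a 1) = fun a => (S.tmul.flip 1) a := rfl
    rw [this]
    refine AddMonoidHomClass.continuous_of_bound (S.tmul.flip 1) ‖(1 : A2)‖ fun a => ?_
    rw [LinearMap.flip_apply, S.norm_tmul, mul_comm]
  have hσ1cont : Continuous σ1 := hσcont.comp htmul1cont
  have hσ1mul : ∀ a b : A1, σ1 (a * b) = σ1 a * σ1 b := by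
    intro a b
    simp only [hσ1]
    rw [← map_mul, S.tmul_mul, one_mul]
  have hσ1add : ∀ a b : A1, σ1 (a + b) = σ1 a + σ1 b := by
    intro a b
    simp only [hσ1, map_add, LinearMap.add_apply]
  have hσ1star : ∀ a : A1, σ1 (star a) = star (σ1 a) := by
    intro a
    simp only [hσ1]
    rw [← map_star, S.tmul_star, star_one]
  have hσ1alg : ∀ r : ℂ, σ1 (algebraMap ℂ A1 r) = algebraMap ℂ (Bop K) r := by
    intro r
    simp only [hσ1, Algebra.algebraMap_eq_smul_one, map_smul, LinearMap.smul_apply,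
      S.tmul_one, map_one]
  have h12 : ∀ (a : A1) (b : A2), σ (S.tmul a b) = σ1 a * σ2 b := by
    intro a b
    simp only [hσ1, hσ2]
    rw [← map_mul, S.tmul_mul, mul_one, one_mul]
  have h21 : ∀ (a : A1) (b : A2), σ2 b * σ1 a = σ1 a * σ2 b := by
    intro a b
    simp only [hσ1, hσ2]
    rw [← map_mul, ← map_mul, S.tmul_mul, S.tmul_mul, one_mul, mul_one, one_mul, mul_one]
  set S0 : Set (Bop K) := σ1 '' (Q1.loc Λ.set : Set A1) with hS0
  rintro z ⟨hzM, hzC⟩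
  -- star-closedness facts
  have hS0star : ∀ x ∈ S0, star x ∈ S0 := by
    rintro _ ⟨a, ha, rfl⟩
    exact ⟨star a, star_mem ha, hσ1star a⟩
  have hvNstar : ∀ x ∈ vN S0, star x ∈ vN S0 := fun x hx =>
    star_mem_commutantS (fun y hy => star_mem_commutantS hS0star hy) hx
  have hzCstar : star z ∈ commutantS (vN S0) := star_mem_commutantS hvNstar hzC
  -- the auxiliary set T
  set T : Set (Bop K) := (σ1 '' (Q1.loc Λ.setᶜ : Set A1)) ∪ Set.range σ2 with hT
  have hTstar : ∀ x ∈ T, star x ∈ T := by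
    rintro _ (⟨a, ha, rfl⟩ | ⟨b, rfl⟩)
    · exact Or.inl ⟨star a, star_mem ha, hσ1star a⟩
    · refine Or.inr ⟨star b, ?_⟩
      simp only [hσ2]
      rw [← map_star, S.tmul_star, star_one]
  have hS0T : S0 ⊆ commutantS T := by
    rintro _ ⟨a, ha, rfl⟩ _ (⟨a', ha', rfl⟩ | ⟨b, rfl⟩)
    · rw [← hσ1mul, ← hσ1mul,
        Q1.loc_commute Λ.setᶜ Λ.set disjoint_compl_left a' ha' a ha]
    · exact h21 a b
  have hzT : z ∈ commutantS T := by
    have h1 : vN S0 ⊆ vN (commutantS T) := vN_mono hS0T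
    have h2 : vN (commutantS T) = commutantS T := commutantS_vN_eq T
    exact h2 ▸ h1 hzM
  have hzTstar : star z ∈ commutantS T := star_mem_commutantS hTstar hzT
  -- commutation with σ1 on all of A1
  have hA1 : ∀ a : A1, σ1 a * z = z * σ1 a ∧ σ1 a * star z = star z * σ1 a := by
    have key : ∀ a ∈ StarAlgebra.adjoin ℂ
        ((Q1.loc Λ.set : Set A1) ∪ (Q1.loc Λ.setᶜ : Set A1)),
        σ1 a * z = z * σ1 a ∧ σ1 a * star z = star z * σ1 a := by
      intro a ha
      induction ha using StarAlgebra.adjoin_induction with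
      | mem x hx =>
        rcases hx with hx | hx
        · have hx' : σ1 x ∈ vN S0 := subset_vN S0 ⟨x, hx, rfl⟩
          exact ⟨hzC _ hx', hzCstar _ hx'⟩
        · exact ⟨hzT _ (Or.inl ⟨x, hx, rfl⟩), hzTstar _ (Or.inl ⟨x, hx, rfl⟩)⟩
      | algebraMap r =>
        rw [hσ1alg r]
        exact ⟨Algebra.commutes r z, Algebra.commutes r (star z)⟩
      | add x y hx hy ihx ihy =>
        rw [hσ1add]
        constructor
        · rw [add_mul, mul_add, ihx.1, ihy.1]
        · rw [add_mul, mul_add, ihx.2, ihy.2]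
      | mul x y hx hy ihx ihy =>
        rw [hσ1mul]
        exact ⟨mul_comm_aux ihx.1 ihy.1, mul_comm_aux ihx.2 ihy.2⟩
      | star x hx ihx =>
        rw [hσ1star]
        constructor
        · calc star (σ1 x) * z = star (star z * σ1 x) := by simp [star_mul]
            _ = star (σ1 x * star z) := by rw [ihx.2]
            _ = z * star (σ1 x) := by simp [star_mul]
        · calc star (σ1 x) * star z = star (z * σ1 x) := by simp [star_mul]
            _ = star (σ1 x * z) := by rw [ihx.1]
            _ = star z * star (σ1 x) := by simp [star_mul]
    intro a
    have hclosed : IsClosed {a : A1 | σ1 a * z = z * σ1 a ∧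
        σ1 a * star z = star z * σ1 a} := by
      exact (isClosed_eq (hσ1cont.mul continuous_const)
          (continuous_const.mul hσ1cont)).inter
        (isClosed_eq (hσ1cont.mul continuous_const) (continuous_const.mul hσ1cont))
    have hsub : ((StarAlgebra.adjoin ℂ
        ((Q1.loc Λ.set : Set A1) ∪ (Q1.loc Λ.setᶜ : Set A1)) : StarSubalgebra ℂ A1) : Set A1)
          ⊆ {a : A1 | σ1 a * z = z * σ1 a ∧ σ1 a * star z = star z * σ1 a} :=
      fun x hx => key x hx
    have hcl := closure_minimal hsub hclosed
    have hmem : a ∈ closure ((StarAlgebra.adjoin ℂ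
        ((Q1.loc Λ.set : Set A1) ∪ (Q1.loc Λ.setᶜ : Set A1)) :
          StarSubalgebra ℂ A1) : Set A1) := by
      rw [(Q1.split_dense Λ.set).closure_eq]
      trivial
    exact hcl hmem
  have hA2 : ∀ b : A2, σ2 b * z = z * σ2 b ∧ σ2 b * star z = star z * σ2 b :=
    fun b => ⟨hzT _ (Or.inr ⟨b, rfl⟩), hzTstar _ (Or.inr ⟨b, rfl⟩)⟩
  -- commutation with σ on all of A
  have hall : ∀ x : A, σ x * z = z * σ x := by
    have key : ∀ x ∈ StarAlgebra.adjoin ℂ {w : A | ∃ a b, w = S.tmul a b},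
        σ x * z = z * σ x ∧ σ x * star z = star z * σ x := by
      intro x hx
      induction hx using StarAlgebra.adjoin_induction with
      | mem w hw =>
        obtain ⟨a, b, rfl⟩ := hw
        rw [h12]
        exact ⟨mul_comm_aux (hA1 a).1 (hA2 b).1, mul_comm_aux (hA1 a).2 (hA2 b).2⟩
      | algebraMap r =>
        rw [AlgHomClass.commutes σ r]
        exact ⟨Algebra.commutes r z, Algebra.commutes r (star z)⟩
      | add x y hx hy ihx ihy =>
        rw [map_add]
        constructor
        · rw [add_mul, mul_add, ihx.1, ihy.1]
        · rw [add_mul, mul_add, ihx.2, ihy.2]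
      | mul x y hx hy ihx ihy =>
        rw [map_mul]
        exact ⟨mul_comm_aux ihx.1 ihy.1, mul_comm_aux ihx.2 ihy.2⟩
      | star x hx ihx =>
        rw [map_star]
        constructor
        · calc star (σ x) * z = star (star z * σ x) := by simp [star_mul]
            _ = star (σ x * star z) := by rw [ihx.2]
            _ = z * star (σ x) := by simp [star_mul]
        · calc star (σ x) * star z = star (z * σ x) := by simp [star_mul]
            _ = star (σ x * z) := by rw [ihx.1]
            _ = star z * star (σ x) := by simp [star_mul]
    intro x
    have hclosed : IsClosed {x : A | σ x * z = z * σ x ∧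
        σ x * star z = star z * σ x} :=
      (isClosed_eq (hσcont.mul continuous_const)
          (continuous_const.mul hσcont)).inter
        (isClosed_eq (hσcont.mul continuous_const) (continuous_const.mul hσcont))
    have hsub : ((StarAlgebra.adjoin ℂ {w : A | ∃ a b, w = S.tmul a b} :
        StarSubalgebra ℂ A) : Set A)
          ⊆ {x : A | σ x * z = z * σ x ∧ σ x * star z = star z * σ x} :=
      fun y hy => key y hy
    have hcl := closure_minimal hsub hclosed
    have hmem : x ∈ closure ((StarAlgebra.adjoin ℂ {w : A | ∃ a b, w = S.tmul a b} :
        StarSubalgebra ℂ A) : Set A) := by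
      rw [S.dense_prod.closure_eq]
      trivial
    exact (hcl hmem).1
  have hz : z ∈ commutantS (Set.range ⇑σ) := by
    rintro _ ⟨x, rfl⟩
    exact hall x
  rw [hσirr] at hz
  exact hz
end
end

section
/- Let π₁, π₂ be irreducible representations of 𝔄₁, 𝔄₂ such that π_j(𝔄_j(Λ))'' is properly infinite for every cone Λ, let π = π₁⊗_s π₂, let σ be an irreducible representation of 𝔄₁⊗_s 𝔄₂ satisfying the superselection criterion with respect to π, and let σ₁(A) = σ(A⊗𝕀). Then for every cone Λ, both commutants σ₁(𝔄₁(Λ^c))' and π₁(𝔄₁(Λ^c))' are properly infinite von Neumann algebras. -/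
noncomputable section

open scoped InnerProductSpace
open Filter

universe u

/-! ## Auxiliary lemmas for Statement 8 -/

section Aux

open scoped CStarAlgebra

variable {H1 H2 H K : Type*}
  [NormedAddCommGroup H1] [InnerProductSpace ℂ H1] [CompleteSpace H1]
  [NormedAddCommGroup H2] [InnerProductSpace ℂ H2] [CompleteSpace H2]
  [NormedAddCommGroup H] [InnerProductSpace ℂ H] [CompleteSpace H]
  [NormedAddCommGroup K] [InnerProductSpace ℂ K] [CompleteSpace K]

lemma one_mem_commutantS (S : Set (Bop H)) : (1 : Bop H) ∈ commutantS S :=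
  fun _ _ => by rw [mul_one, one_mul]

lemma vN_subset_commutantS {S T : Set (Bop H)} (h : T ⊆ commutantS S) :
    vN S ⊆ commutantS T := fun _ hy x hx => hy x (h hx)

lemma one_mem_vN (S : Set (Bop H)) : (1 : Bop H) ∈ vN S := one_mem_commutantS _

lemma isProjectionOp_one : IsProjectionOp (1 : Bop H) := ⟨one_mul 1, star_one _⟩

lemma HT_opTensor_mul (T : HilbertTensor H1 H2 H) (a c : Bop H1) (b d : Bop H2) :
    T.opTensor a b * T.opTensor c d = T.opTensor (a * c) (b * d) :=
  ContinuousLinearMap.ext_on T.dense_span (by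
    rintro z ⟨x, y, rfl⟩
    simp only [ContinuousLinearMap.mul_apply, T.opTensor_tmul])

lemma HT_opTensor_one (T : HilbertTensor H1 H2 H) : T.opTensor 1 1 = (1 : Bop H) :=
  ContinuousLinearMap.ext_on T.dense_span (by
    rintro z ⟨x, y, rfl⟩
    simp only [ContinuousLinearMap.one_apply, T.opTensor_tmul])

lemma HT_opTensor_star (T : HilbertTensor H1 H2 H) (a : Bop H1) (b : Bop H2) :
    star (T.opTensor a b) = T.opTensor (star a) (star b) := by
  have h1 : ∀ (x1 : H1) (x2 : H2) (v : H),
      ⟪T.opTensor (star a) (star b) (T.tmul x1 x2), v⟫_ℂ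
        = ⟪T.tmul x1 x2, T.opTensor a b v⟫_ℂ := by
    intro x1 x2 v
    have heq : (innerSL ℂ (T.opTensor (star a) (star b) (T.tmul x1 x2)))
        = (innerSL ℂ (T.tmul x1 x2)).comp (T.opTensor a b) :=
      ContinuousLinearMap.ext_on T.dense_span (by
        rintro z ⟨y1, y2, rfl⟩
        simp only [innerSL_apply_apply, ContinuousLinearMap.comp_apply, T.opTensor_tmul, T.inner_tmul,
          ContinuousLinearMap.star_eq_adjoint, ContinuousLinearMap.adjoint_inner_left])
    have := congrArg (fun f : H →L[ℂ] ℂ => f v) heq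
    simpa only [innerSL_apply_apply, ContinuousLinearMap.comp_apply] using this
  have key : ∀ (u v : H),
      ⟪T.opTensor (star a) (star b) u, v⟫_ℂ = ⟪u, T.opTensor a b v⟫_ℂ := by
    intro u v
    have heq : (innerSL ℂ v).comp (T.opTensor (star a) (star b))
        = innerSL ℂ ((T.opTensor a b) v) :=
      ContinuousLinearMap.ext_on T.dense_span (by
        rintro z ⟨x1, x2, rfl⟩
        simp only [innerSL_apply_apply, ContinuousLinearMap.comp_apply]
        have h2 := congrArg (starRingEnd ℂ) (h1 x1 x2 v)
        rwa [inner_conj_symm, inner_conj_symm] at h2)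
    have h3 := congrArg (fun f : H →L[ℂ] ℂ => f u) heq
    simp only [innerSL_apply_apply, ContinuousLinearMap.comp_apply] at h3
    have h4 := congrArg (starRingEnd ℂ) h3
    rwa [inner_conj_symm, inner_conj_symm] at h4
  rw [ContinuousLinearMap.star_eq_adjoint]
  exact ((ContinuousLinearMap.eq_adjoint_iff _ _).mpr key).symm

lemma HT_tmul_right_cancel (T : HilbertTensor H1 H2 H) {x : H1} (hx : x ≠ 0) {z z' : H2}
    (h : T.tmul x z = T.tmul x z') : z = z' := by
  have h0 : T.tmul x (z - z') = 0 := by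
    rw [map_sub, h, sub_self]
  have h2 := T.inner_tmul x x (z - z') (z - z')
  rw [h0] at h2
  simp only [inner_zero_right] at h2
  rcases mul_eq_zero.mp h2.symm with h3 | h3
  · exact absurd (inner_self_eq_zero.mp h3) hx
  · exact sub_eq_zero.mp (inner_self_eq_zero.mp h3)

/-- If `p` is selfadjoint and commutes with `ψ a` for `a` in a set generating a dense
star-subalgebra, then `p` commutes with every `ψ a`. -/
lemma comm_of_dense_gen {A : Type*} [NormedRing A] [StarRing A] [NormedAlgebra ℂ A]
    [StarModule ℂ A] (ψ : A →⋆ₐ[ℂ] Bop K) (hψ : Continuous ψ) (p : Bop K) (hp : star p = p)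
    (s : Set A)
    (hs : Dense ((StarAlgebra.adjoin ℂ s : StarSubalgebra ℂ A) : Set A))
    (h : ∀ a ∈ s, p * ψ a = ψ a * p) (a : A) : p * ψ a = ψ a * p := by
  let C : StarSubalgebra ℂ (Bop K) :=
    { carrier := {x | p * x = x * p}
      mul_mem' := by
        intro x y hx hy
        show p * (x * y) = (x * y) * p
        rw [← mul_assoc, hx, mul_assoc, hy, mul_assoc]
      add_mem' := by
        intro x y hx hy
        show p * (x + y) = (x + y) * p
        rw [mul_add, add_mul, hx, hy]
      algebraMap_mem' := by
        intro c
        show p * algebraMap ℂ (Bop K) c = algebraMap ℂ (Bop K) c * p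
        rw [Algebra.algebraMap_eq_smul_one, mul_smul_comm, smul_mul_assoc, mul_one, one_mul]
      star_mem' := by
        intro x hx
        show p * star x = star x * p
        have h2 := congrArg star hx
        rw [star_mul, star_mul, hp] at h2
        exact h2.symm }
  have hCclosed : IsClosed (C : Set (Bop K)) :=
    isClosed_eq (continuous_const.mul continuous_id) (continuous_id.mul continuous_const)
  have hsub : ((StarAlgebra.adjoin ℂ s : StarSubalgebra ℂ A) : Set A)
      ⊆ ⇑ψ ⁻¹' (C : Set (Bop K)) := by
    intro x hx
    exact StarAlgebra.adjoin_le (S := StarSubalgebra.comap ψ C) (fun y hy => h y hy) hx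
  have hmem : a ∈ closure ((StarAlgebra.adjoin ℂ s : StarSubalgebra ℂ A) : Set A) := by
    rw [hs.closure_eq]; trivial
  exact closure_minimal hsub (hCclosed.preimage hψ) hmem

end Aux
/-- The embedding `a ↦ a ⊗ 1` of `A1` into the stacked algebra, as a star algebra
homomorphism. -/
def stackLeftHom {A1 A2 A : Type*}
    [NormedRing A1] [StarRing A1] [NormedAlgebra ℂ A1] [StarModule ℂ A1]
    [NormedRing A2] [StarRing A2] [NormedAlgebra ℂ A2] [StarModule ℂ A2]
    [NormedRing A] [StarRing A] [NormedAlgebra ℂ A] [StarModule ℂ A]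
    (S : CStarStack A1 A2 A) : A1 →⋆ₐ[ℂ] A where
  toFun a := S.tmul a 1
  map_one' := S.tmul_one
  map_mul' a b := by rw [S.tmul_mul, one_mul]
  map_zero' := by simp
  map_add' a b := by simp
  commutes' c := by simp [Algebra.algebraMap_eq_smul_one, S.tmul_one]
  map_star' a := by rw [S.tmul_star, star_one]

open scoped CStarAlgebra
/-- For every cone `Λ`, the commutants `σ₁(𝔄₁(Λᶜ))'` and
`π₁(𝔄₁(Λᶜ))'` are properly infinite von Neumann algebras. -/
theorem commutants_properly_infinite
    {A1 A2 A H1 H2 H K : Type*}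
    [NormedRing A1] [StarRing A1] [CStarRing A1] [NormedAlgebra ℂ A1] [StarModule ℂ A1] [CompleteSpace A1]
    [NormedRing A2] [StarRing A2] [CStarRing A2] [NormedAlgebra ℂ A2] [StarModule ℂ A2] [CompleteSpace A2]
    [NormedRing A] [StarRing A] [CStarRing A] [NormedAlgebra ℂ A] [StarModule ℂ A] [CompleteSpace A]
    [NormedAddCommGroup H1] [InnerProductSpace ℂ H1] [CompleteSpace H1]
    [NormedAddCommGroup H2] [InnerProductSpace ℂ H2] [CompleteSpace H2]
    [NormedAddCommGroup H] [InnerProductSpace ℂ H] [CompleteSpace H]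
    [NormedAddCommGroup K] [InnerProductSpace ℂ K] [CompleteSpace K]
    (Q1 : QuasiLocal A1) (Q2 : QuasiLocal A2)
    (π1 : A1 →⋆ₐ[ℂ] Bop H1) (π2 : A2 →⋆ₐ[ℂ] Bop H2)
    (hirr1 : IsIrredRep ⇑π1) (hirr2 : IsIrredRep ⇑π2)
    (hpi1 : ∀ Λ : Cone, ProperlyInfinite (vN (⇑π1 '' (Q1.loc Λ.set : Set A1))))
    (hpi2 : ∀ Λ : Cone, ProperlyInfinite (vN (⇑π2 '' (Q2.loc Λ.set : Set A2))))
    (S : CStarStack A1 A2 A) (SQ : StackedQL Q1 Q2 S) (T : HilbertTensor H1 H2 H)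
    (π : A →⋆ₐ[ℂ] Bop H)
    (hπ : ∀ (a : A1) (b : A2), π (S.tmul a b) = T.opTensor (π1 a) (π2 b))
    (σ : A →⋆ₐ[ℂ] Bop K) (hσirr : IsIrredRep ⇑σ) (hσ : SSC SQ.Q ⇑π ⇑σ) :
    ∀ Λ : Cone,
      ProperlyInfinite
        (commutantS ((fun a : A1 => σ (S.tmul a 1)) '' (Q1.loc Λ.setᶜ : Set A1))) ∧
      ProperlyInfinite (commutantS (⇑π1 '' (Q1.loc Λ.setᶜ : Set A1))) := by
  letI : CStarAlgebra A1 := {}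
  letI : CStarAlgebra A2 := {}
  letI : CStarAlgebra A := {}
  letI : CStarAlgebra (Bop H1) := {}
  letI : CStarAlgebra (Bop K) := {}
  have hσcont : Continuous ⇑σ := map_continuous σ
  have hπ1cont : Continuous ⇑π1 := map_continuous π1
  intro Λ
  constructor
  · -- first claim: the commutant of σ₁(𝔄₁(Λᶜ)) is properly infinite
    intro p hpN hproj hpc hfin
    have hmem_loc : ∀ (Tset : Set Plane) (a : A1) (b : A2), a ∈ Q1.loc Tset →
        b ∈ Q2.loc Tset → S.tmul a b ∈ SQ.Q.loc Tset := by
      intro Tset a b ha hb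
      rw [← SetLike.mem_coe, SQ.loc_eq]
      exact subset_closure (StarAlgebra.subset_adjoin ℂ _ ⟨a, ha, b, hb, rfl⟩)
    have hright : ∀ b : A2, σ (S.tmul 1 b) ∈
        commutantS ((fun a : A1 => σ (S.tmul a 1)) '' (Q1.loc Λ.setᶜ : Set A1)) := by
      rintro b x ⟨a, ha, rfl⟩
      rw [← map_mul, ← map_mul, S.tmul_mul, S.tmul_mul, mul_one, one_mul, mul_one, one_mul]
    have hleft : ∀ a ∈ Q1.loc Λ.set, σ (S.tmul a 1) ∈
        commutantS ((fun a : A1 => σ (S.tmul a 1)) '' (Q1.loc Λ.setᶜ : Set A1)) := by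
      rintro a ha x ⟨a', ha', rfl⟩
      rw [← map_mul, ← map_mul, S.tmul_mul, S.tmul_mul, mul_one,
        Q1.loc_commute Λ.setᶜ Λ.set disjoint_compl_left a' ha' a ha]
    have hA1 : ∀ a : A1, p * σ (S.tmul a 1) = σ (S.tmul a 1) * p := by
      have := comm_of_dense_gen (σ.comp (stackLeftHom S))
        (hσcont.comp (map_continuous (stackLeftHom S))) p hproj.2
        (↑(Q1.loc Λ.set) ∪ ↑(Q1.loc Λ.setᶜ)) (Q1.split_dense Λ.set) ?_
      · exact fun a => this a
      · intro a ha
        rcases ha with ha | ha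
        · exact (hpc _ (hleft a ha)).symm
        · exact (hpN _ ⟨a, ha, rfl⟩).symm
    have hA2 : ∀ b : A2, p * σ (S.tmul 1 b) = σ (S.tmul 1 b) * p :=
      fun b => (hpc _ (hright b)).symm
    have hAll : ∀ z : A, p * σ z = σ z * p := by
      refine comm_of_dense_gen σ hσcont p hproj.2 {z : A | ∃ a b, z = S.tmul a b}
        S.dense_prod ?_
      rintro z ⟨a, b, rfl⟩
      have hz : S.tmul a b = S.tmul a 1 * S.tmul 1 b := by
        rw [S.tmul_mul, mul_one, one_mul]
      rw [hz, map_mul, ← mul_assoc, hA1, mul_assoc, hA2, mul_assoc]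
    have hscal : p ∈ ScalarOps := by
      rw [← hσirr]
      rintro x ⟨z, rfl⟩
      exact (hAll z).symm
    obtain ⟨c, hc⟩ := hscal
    by_cases h1K : (1 : Bop K) = 0
    · rw [← hc]
      show c • (1 : Bop K) = 0
      rw [h1K, smul_zero]
    · have hcc : (c * c - c) • (1 : Bop K) = 0 := by
        have hpp := hproj.1
        rw [← hc] at hpp
        simp only at hpp
        rw [smul_mul_assoc, mul_smul_comm, one_mul, smul_smul] at hpp
        rw [sub_smul, hpp, sub_self]
      rcases smul_eq_zero.mp hcc with h2 | h2
      swap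
      · exact absurd h2 h1K
      have h3 : c * (c - 1) = 0 := by rw [mul_sub, mul_one, h2]
      rcases mul_eq_zero.mp h3 with h4 | h4
      · rw [← hc]
        show c • (1 : Bop K) = 0
        rw [h4, zero_smul]
      · have hp1 : p = 1 := by rw [← hc, sub_eq_zero.mp h4]; exact one_smul _ _
        -- derive a contradiction with finiteness of `p = 1`
        have hKof : (1 : Bop H) = 0 → (1 : Bop K) = 0 := by
          intro h0
          obtain ⟨U, hU⟩ := hσ Λ
          have hv : ∀ v : K, v = 0 := by
            intro v
            have h5 : U v = 0 := by
              have h6 := congrArg (fun f : Bop H => f (U v)) h0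
              simpa using h6
            have h7 := congrArg U.symm h5
            simpa using h7
          ext v
          rw [ContinuousLinearMap.one_apply, ContinuousLinearMap.zero_apply, hv v]
        have h1H1 : (1 : Bop H1) ≠ 0 := by
          intro h0
          apply h1K
          apply hKof
          rw [← HT_opTensor_one T, h0, map_zero]
          simp
        have h1H2 : (1 : Bop H2) ≠ 0 := by
          intro h0
          apply h1K
          apply hKof
          rw [← HT_opTensor_one T, h0]
          exact map_zero _
        have hx0 : ∃ x0 : H1, x0 ≠ 0 := by
          by_contra hno
          push_neg at hno
          exact h1H1 (by ext x; simp [hno x])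
        by_cases hwfin : IsFiniteProjIn (vN (⇑π2 '' (Q2.loc Λ.set : Set A2))) 1
        · exact absurd
            (hpi2 Λ 1 (one_mem_vN _) isProjectionOp_one (one_mem_commutantS _) hwfin) h1H2
        · unfold IsFiniteProjIn at hwfin
          push_neg at hwfin
          obtain ⟨w, hwM, hw1, hw2, hw3⟩ := hwfin
          obtain ⟨U, hU⟩ := hσ Λ
          set uKH : K →L[ℂ] H := U.toLinearIsometry.toContinuousLinearMap with huKH
          set uHK : H →L[ℂ] K := U.symm.toLinearIsometry.toContinuousLinearMap with huHK
          set Φ : Bop H → Bop K := fun x => uHK.comp (x.comp uKH) with hΦ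
          have hΦapp : ∀ (x : Bop H) (v : K), Φ x v = U.symm (x (U v)) := fun x v => rfl
          have hΦmul : ∀ x y : Bop H, Φ x * Φ y = Φ (x * y) := by
            intro x y
            ext v
            show Φ x (Φ y v) = Φ (x * y) v
            rw [hΦapp, hΦapp, hΦapp, U.apply_symm_apply, ContinuousLinearMap.mul_apply]
          have hΦone : Φ 1 = 1 := by
            ext v
            show Φ 1 v = v
            rw [hΦapp, ContinuousLinearMap.one_apply, U.symm_apply_apply]
          have hΦstar : ∀ x : Bop H, star (Φ x) = Φ (star x) := by
            intro x
            rw [ContinuousLinearMap.star_eq_adjoint]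
            refine ((ContinuousLinearMap.eq_adjoint_iff _ _).mpr ?_).symm
            intro u v
            rw [hΦapp, hΦapp]
            calc ⟪U.symm (star x (U u)), v⟫_ℂ
                = ⟪U (U.symm (star x (U u))), U v⟫_ℂ := (U.inner_map_map _ _).symm
              _ = ⟪star x (U u), U v⟫_ℂ := by rw [U.apply_symm_apply]
              _ = ⟪U u, x (U v)⟫_ℂ := by
                  rw [ContinuousLinearMap.star_eq_adjoint,
                    ContinuousLinearMap.adjoint_inner_left]
              _ = ⟪u, U.symm (x (U v))⟫_ℂ := by
                  rw [← U.inner_map_map u (U.symm (x (U v))), U.apply_symm_apply]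
          have hΦinj : Function.Injective Φ := by
            intro x y hxy
            ext v
            have h5 := congrArg (fun f : Bop K => U (f (U.symm v))) hxy
            simpa [hΦapp, U.apply_symm_apply] using h5
          have hσΦ : ∀ z ∈ SQ.Q.loc Λ.setᶜ, σ z = Φ (π z) := by
            intro z hz
            ext v
            rw [hΦapp, ← hU z hz v, U.symm_apply_apply]
          set w1 : Bop H := T.opTensor 1 w with hw1def
          set vK : Bop K := Φ w1 with hvKdef
          have hvmem : vK ∈ commutantS
              ((fun a : A1 => σ (S.tmul a 1)) '' (Q1.loc Λ.setᶜ : Set A1)) := by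
            rintro x ⟨a, ha, rfl⟩
            have hzmem : S.tmul a (1 : A2) ∈ SQ.Q.loc Λ.setᶜ :=
              hmem_loc _ a 1 ha (one_mem _)
            show σ (S.tmul a 1) * vK = vK * σ (S.tmul a 1)
            rw [hσΦ _ hzmem, hvKdef, hΦmul, hΦmul]
            congr 1
            rw [hπ, map_one, hw1def, HT_opTensor_mul, HT_opTensor_mul, one_mul, one_mul,
              mul_one, mul_one]
          have hstarw1 : star w1 = T.opTensor 1 (star w) := by
            rw [hw1def, HT_opTensor_star, star_one]
          have hviso : star vK * vK = p := by
            have h5 : star w1 * w1 = 1 := by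
              rw [hstarw1, hw1def, HT_opTensor_mul, one_mul, hw1, HT_opTensor_one]
            rw [hp1, hvKdef, hΦstar, hΦmul, h5, hΦone]
          have hvfin := hfin vK hvmem hviso (by rw [hp1, one_mul])
          have h6 : T.opTensor 1 (w * star w) = T.opTensor 1 1 := by
            apply hΦinj
            calc Φ (T.opTensor 1 (w * star w))
                = Φ (w1 * star w1) := by
                  rw [hstarw1, hw1def, HT_opTensor_mul, one_mul]
              _ = Φ w1 * Φ (star w1) := (hΦmul _ _).symm
              _ = vK * star vK := by rw [← hΦstar, hvKdef]
              _ = (1 : Bop K) := by rw [hvfin, hp1]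
              _ = Φ (T.opTensor 1 1) := by rw [HT_opTensor_one, hΦone]
          obtain ⟨x0, hx0ne⟩ := hx0
          have h7 : w * star w = 1 := by
            ext y
            have h8 := congrArg (fun f : Bop H => f (T.tmul x0 y)) h6
            simp only [T.opTensor_tmul, ContinuousLinearMap.one_apply] at h8
            exact HT_tmul_right_cancel T hx0ne h8
          exact absurd h7 hw3
  · -- second claim: the commutant of π₁(𝔄₁(Λᶜ)) is properly infinite
    intro p hpN hproj hpc hfin
    have hA : ∀ a : A1, p * π1 a = π1 a * p := by
      refine comm_of_dense_gen π1 hπ1cont p hproj.2 (↑(Q1.loc Λ.set) ∪ ↑(Q1.loc Λ.setᶜ))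
        (Q1.split_dense Λ.set) ?_
      intro a ha
      rcases ha with ha | ha
      · refine (hpc _ ?_).symm
        rintro x ⟨b, hb, rfl⟩
        rw [← map_mul, ← map_mul, Q1.loc_commute Λ.setᶜ Λ.set disjoint_compl_left b hb a ha]
      · exact (hpN _ ⟨a, ha, rfl⟩).symm
    have hscal : p ∈ ScalarOps := by
      rw [← hirr1]
      rintro x ⟨a, rfl⟩
      exact (hA a).symm
    obtain ⟨c, hc⟩ := hscal
    by_cases h1 : (1 : Bop H1) = 0
    · rw [← hc]
      show c • (1 : Bop H1) = 0
      rw [h1, smul_zero]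
    · have hcc : (c * c - c) • (1 : Bop H1) = 0 := by
        have hpp := hproj.1
        rw [← hc] at hpp
        simp only at hpp
        rw [smul_mul_assoc, mul_smul_comm, one_mul, smul_smul] at hpp
        rw [sub_smul, hpp, sub_self]
      rcases smul_eq_zero.mp hcc with h2 | h2
      swap
      · exact absurd h2 h1
      have h3 : c * (c - 1) = 0 := by rw [mul_sub, mul_one, h2]
      rcases mul_eq_zero.mp h3 with h4 | h4
      · rw [← hc]
        show c • (1 : Bop H1) = 0
        rw [h4, zero_smul]
      · have hp1 : p = 1 := by rw [← hc, sub_eq_zero.mp h4]; exact one_smul _ _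
        have hTsub : ⇑π1 '' (Q1.loc Λ.setᶜ : Set A1) ⊆
            commutantS (⇑π1 '' (Q1.loc Λ.set : Set A1)) := by
          rintro x ⟨b, hb, rfl⟩ y ⟨a, ha, rfl⟩
          rw [← map_mul, ← map_mul, Q1.loc_commute Λ.set Λ.setᶜ disjoint_compl_right a ha b hb]
        have hfin1 : IsFiniteProjIn (vN (⇑π1 '' (Q1.loc Λ.set : Set A1))) 1 := by
          intro v hv hv1 hv2
          have hvmem := vN_subset_commutantS hTsub hv
          have h5 := hfin v hvmem (by rw [hp1]; exact hv1) (by rw [hp1]; exact hv2)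
          rw [← hp1]
          exact h5
        exact absurd
          (hpi1 Λ 1 (one_mem_vN _) isProjectionOp_one (one_mem_commutantS _) hfin1) h1
end
end
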